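/- arXiv:2410.21810 — 2 statements merged into one kernel-verified Lean document; each statement's English description precedes it below -/
import Mathlib

section
/- Suppose V_ℂ(I[f]) is finite. Then #V_ℂ(I[f,z]) ≤ 2ⁿ · #V_ℂ(I[f]). -/
open MvPolynomial Set

noncomputable def csqrt (c : ℂ) : ℂ :=
  Classical.choose (IsAlgClosed.exists_pow_nat_eq c (n := 2) (by norm_num))

lemma csqrt_sq (c : ℂ) : (csqrt c) ^ 2 = c :=
  Classical.choose_spec (IsAlgClosed.exists_pow_nat_eq c (n := 2) (by norm_num))

lemma sq_eq_cases {s c : ℂ} (h : s ^ 2 = c) : s = csqrt c ∨ s = -csqrt c := by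
  have h2 : (s - csqrt c) * (s + csqrt c) = 0 := by
    have h1 := csqrt_sq c
    linear_combination h - h1
  rcases mul_eq_zero.mp h2 with h3 | h3
  · left; linear_combination h3
  · right; linear_combination h3

lemma span_vanish {σ : Type*} (S : Set (MvPolynomial σ ℝ)) (β : σ → ℂ) :
    (∀ p ∈ Ideal.span S, aeval β p = 0) ↔ ∀ p ∈ S, aeval β p = 0 := by
  constructor
  · exact fun h p hp => h p (Ideal.subset_span hp)
  · intro h p hp
    have hle : Ideal.span S ≤ RingHom.ker (aeval β : MvPolynomial σ ℝ →ₐ[ℝ] ℂ).toRingHom :=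
      Ideal.span_le.mpr fun q hq => h q hq
    exact hle hp

theorem stmt6 (n : ℕ) (f : Fin n → MvPolynomial (Fin n) ℝ)
    (hfin : ({α : Fin n → ℂ | ∀ p ∈ Ideal.span
        (Set.range fun i : Fin n => MvPolynomial.X i * f i),
        MvPolynomial.aeval α p = 0}).Finite) :
    ({β : (Fin n ⊕ (Fin n ⊕ Fin n)) → ℂ | ∀ p ∈ Ideal.span
        ((Set.range fun i : Fin n =>
            MvPolynomial.rename (Sum.inl : Fin n → Fin n ⊕ (Fin n ⊕ Fin n))
              (MvPolynomial.X i * f i)) ∪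
         (Set.range fun i : Fin n =>
            (MvPolynomial.X (Sum.inr (Sum.inl i)) : MvPolynomial (Fin n ⊕ (Fin n ⊕ Fin n)) ℝ) ^ 2
              - MvPolynomial.X (Sum.inl i)) ∪
         (Set.range fun i : Fin n =>
            (MvPolynomial.X (Sum.inr (Sum.inr i)) : MvPolynomial (Fin n ⊕ (Fin n ⊕ Fin n)) ℝ) ^ 2
              - MvPolynomial.rename (Sum.inl : Fin n → Fin n ⊕ (Fin n ⊕ Fin n)) (f i))),
        MvPolynomial.aeval β p = 0}).Finite ∧
    ({β : (Fin n ⊕ (Fin n ⊕ Fin n)) → ℂ | ∀ p ∈ Ideal.span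
        ((Set.range fun i : Fin n =>
            MvPolynomial.rename (Sum.inl : Fin n → Fin n ⊕ (Fin n ⊕ Fin n))
              (MvPolynomial.X i * f i)) ∪
         (Set.range fun i : Fin n =>
            (MvPolynomial.X (Sum.inr (Sum.inl i)) : MvPolynomial (Fin n ⊕ (Fin n ⊕ Fin n)) ℝ) ^ 2
              - MvPolynomial.X (Sum.inl i)) ∪
         (Set.range fun i : Fin n =>
            (MvPolynomial.X (Sum.inr (Sum.inr i)) : MvPolynomial (Fin n ⊕ (Fin n ⊕ Fin n)) ℝ) ^ 2
              - MvPolynomial.rename (Sum.inl : Fin n → Fin n ⊕ (Fin n ⊕ Fin n)) (f i))),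
        MvPolynomial.aeval β p = 0}).ncard ≤
      2 ^ n * ({α : Fin n → ℂ | ∀ p ∈ Ideal.span
        (Set.range fun i : Fin n => MvPolynomial.X i * f i),
        MvPolynomial.aeval α p = 0}).ncard := by
  classical
  set V1 : Set (Fin n → ℂ) := {α : Fin n → ℂ | ∀ p ∈ Ideal.span
        (Set.range fun i : Fin n => MvPolynomial.X i * f i),
        MvPolynomial.aeval α p = 0} with hV1
  set V2 : Set ((Fin n ⊕ (Fin n ⊕ Fin n)) → ℂ) := {β | ∀ p ∈ Ideal.span
        ((Set.range fun i : Fin n =>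
            MvPolynomial.rename (Sum.inl : Fin n → Fin n ⊕ (Fin n ⊕ Fin n))
              (MvPolynomial.X i * f i)) ∪
         (Set.range fun i : Fin n =>
            (MvPolynomial.X (Sum.inr (Sum.inl i)) : MvPolynomial (Fin n ⊕ (Fin n ⊕ Fin n)) ℝ) ^ 2
              - MvPolynomial.X (Sum.inl i)) ∪
         (Set.range fun i : Fin n =>
            (MvPolynomial.X (Sum.inr (Sum.inr i)) : MvPolynomial (Fin n ⊕ (Fin n ⊕ Fin n)) ℝ) ^ 2
              - MvPolynomial.rename (Sum.inl : Fin n → Fin n ⊕ (Fin n ⊕ Fin n)) (f i))),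
        MvPolynomial.aeval β p = 0} with hV2
  have hmem1 : ∀ α : Fin n → ℂ, α ∈ V1 ↔ ∀ i, α i * aeval α (f i) = 0 := by
    intro α
    rw [hV1, Set.mem_setOf_eq, span_vanish]
    simp [Set.forall_mem_range]
  have hmem2 : ∀ β : (Fin n ⊕ (Fin n ⊕ Fin n)) → ℂ, β ∈ V2 ↔
      (∀ i, β (Sum.inl i) * aeval (β ∘ Sum.inl) (f i) = 0) ∧
      (∀ i, β (Sum.inr (Sum.inl i)) ^ 2 = β (Sum.inl i)) ∧
      (∀ i, β (Sum.inr (Sum.inr i)) ^ 2 = aeval (β ∘ Sum.inl) (f i)) := by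
    intro β
    rw [hV2, Set.mem_setOf_eq, span_vanish]
    simp only [Set.mem_union, Set.forall_mem_range, or_imp, forall_and, Set.union_def,
      Set.mem_setOf_eq]
    constructor
    · rintro ⟨⟨h1, h2⟩, h3⟩
      refine ⟨fun i => ?_, fun i => ?_, fun i => ?_⟩
      · have := h1 i; simpa [aeval_rename, sub_eq_zero] using this
      · have := h2 i; simpa [sub_eq_zero] using this
      · have := h3 i; simpa [aeval_rename, sub_eq_zero] using this
    · rintro ⟨h1, h2, h3⟩
      refine ⟨⟨fun i => ?_, fun i => ?_⟩, fun i => ?_⟩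
      · simpa [aeval_rename, sub_eq_zero] using h1 i
      · simpa [sub_eq_zero] using h2 i
      · simpa [aeval_rename, sub_eq_zero] using h3 i
  -- the encoding map
  set enc : ((Fin n ⊕ (Fin n ⊕ Fin n)) → ℂ) → ((Fin n → ℂ) × (Fin n → Bool)) :=
    fun β => (β ∘ Sum.inl, fun i =>
      if β (Sum.inl i) ≠ 0 then decide (β (Sum.inr (Sum.inl i)) = csqrt (β (Sum.inl i)))
      else decide (β (Sum.inr (Sum.inr i)) = csqrt (aeval (β ∘ Sum.inl) (f i)))) with henc
  have hmaps : ∀ β ∈ V2, enc β ∈ V1 ×ˢ (Set.univ : Set (Fin n → Bool)) := by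
    intro β hβ
    obtain ⟨h1, _, _⟩ := (hmem2 β).mp hβ
    exact ⟨(hmem1 _).mpr (fun i => h1 i), Set.mem_univ _⟩
  have hinj : Set.InjOn enc V2 := by
    intro β₁ hβ₁ β₂ hβ₂ heq
    obtain ⟨h11, h12, h13⟩ := (hmem2 β₁).mp hβ₁
    obtain ⟨h21, h22, h23⟩ := (hmem2 β₂).mp hβ₂
    have hα : β₁ ∘ Sum.inl = β₂ ∘ Sum.inl := congrArg Prod.fst heq
    have hb := congrArg Prod.snd heq
    funext x
    have hαi : ∀ i, β₁ (Sum.inl i) = β₂ (Sum.inl i) := fun i => congrFun hα i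
    rcases x with i | (i | i)
    · exact hαi i
    · -- square root of α i
      by_cases h0 : β₁ (Sum.inl i) = 0
      · have e1 : β₁ (Sum.inr (Sum.inl i)) = 0 := by
          have := h12 i; rw [h0] at this; exact pow_eq_zero_iff (by norm_num) |>.mp this
        have e2 : β₂ (Sum.inr (Sum.inl i)) = 0 := by
          have := h22 i; rw [← hαi i, h0] at this
          exact pow_eq_zero_iff (by norm_num) |>.mp this
        rw [e1, e2]
      · have hbit := congrFun hb i
        simp only [henc, h0, hαi i ▸ h0, if_pos, ne_eq, not_false_eq_true, if_true,
          decide_eq_decide] at hbit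
        rw [← hαi i] at hbit
        by_cases hc : β₁ (Sum.inr (Sum.inl i)) = csqrt (β₁ (Sum.inl i))
        · rw [hc, hbit.mp hc]
        · have hc2 : ¬ β₂ (Sum.inr (Sum.inl i)) = csqrt (β₁ (Sum.inl i)) :=
            fun h => hc (hbit.mpr h)
          have d1 := sq_eq_cases (h12 i)
          have d2 := sq_eq_cases ((hαi i) ▸ h22 i)
          rcases d1 with d1 | d1
          · exact absurd d1 hc
          · rcases d2 with d2 | d2
            · exact absurd d2 hc2
            · rw [d1, d2]
    · -- square root of f i α
      by_cases h0 : β₁ (Sum.inl i) = 0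
      · have hbit := congrFun hb i
        simp only [henc, h0, hαi i ▸ h0, ne_eq, not_true_eq_false, if_false,
          decide_eq_decide] at hbit
        rw [← hα] at hbit
        by_cases hc : β₁ (Sum.inr (Sum.inr i)) = csqrt (aeval (β₁ ∘ Sum.inl) (f i))
        · rw [hc, hbit.mp hc]
        · have hc2 : ¬ β₂ (Sum.inr (Sum.inr i)) = csqrt (aeval (β₁ ∘ Sum.inl) (f i)) :=
            fun h => hc (hbit.mpr h)
          have d1 := sq_eq_cases (h13 i)
          have d2 := sq_eq_cases (hα ▸ h23 i)
          rcases d1 with d1 | d1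
          · exact absurd d1 hc
          · rcases d2 with d2 | d2
            · exact absurd d2 hc2
            · rw [d1, d2]
      · -- α i ≠ 0 forces f i α = 0, hence both coords are 0
        have hf0 : aeval (β₁ ∘ Sum.inl) (f i) = 0 := by
          rcases mul_eq_zero.mp (h11 i) with h | h
          · exact absurd h h0
          · exact h
        have e1 : β₁ (Sum.inr (Sum.inr i)) = 0 := by
          have := h13 i; rw [hf0] at this; exact pow_eq_zero_iff (by norm_num) |>.mp this
        have e2 : β₂ (Sum.inr (Sum.inr i)) = 0 := by
          have := h23 i; rw [← hα, hf0] at this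
          exact pow_eq_zero_iff (by norm_num) |>.mp this
        rw [e1, e2]
  have htfin : (V1 ×ˢ (Set.univ : Set (Fin n → Bool))).Finite := hfin.prod (Set.finite_univ)
  have hV2fin : V2.Finite := by
    have himg : (enc '' V2).Finite := htfin.subset (Set.image_subset_iff.mpr hmaps)
    exact Set.Finite.of_finite_image himg hinj
  refine ⟨hV2fin, ?_⟩
  have hle : V2.ncard ≤ (V1 ×ˢ (Set.univ : Set (Fin n → Bool))).ncard :=
    Set.ncard_le_ncard_of_injOn enc hmaps hinj htfin
  have hcard : (V1 ×ˢ (Set.univ : Set (Fin n → Bool))).ncard = V1.ncard * 2 ^ n := by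
    rw [← Nat.card_coe_set_eq, ← Nat.card_coe_set_eq,
      Nat.card_congr (Equiv.Set.prod V1 Set.univ), Nat.card_prod]
    congr 1
    rw [Nat.card_congr (Equiv.Set.univ _), Nat.card_eq_fintype_card]
    simp
  calc V2.ncard ≤ V1.ncard * 2 ^ n := hcard ▸ hle
    _ = 2 ^ n * V1.ncard := Nat.mul_comm _ _
end

section
/- Let d ≥ 1 and let p = (p₁,…,pₙ) be the polynomial map with pᵢ(x) = (−1)^d ∏_{j=1}^{d} (xᵢ − j). Then the solution set of CP(p) equals {α ∈ ℝⁿ : αᵢ ∈ {0,1,…,d} for each i}; in particular, CP(p) has exactly (d+1)ⁿ solutions. -/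
/-!
Every coordinate map `pᵢ` is the same univariate polynomial `q(t) = (-1)ᵈ ∏ⱼ₌₁ᵈ (t - j)`
applied to `xᵢ`. Since all terms `xᵢ pᵢ(x)` of the complementarity sum are nonnegative, the
sum vanishes iff each term does, so the problem splits into `n` copies of the scalar problem
`t ≥ 0, q(t) ≥ 0, t q(t) = 0`. Its solutions are the roots `1, …, d` of `q` together with `0`,
where `q(0) = d! > 0`.
-/

open Finset

noncomputable def alternatingRootProd (d : ℕ) (t : ℝ) : ℝ :=
  (-1) ^ d * ∏ j ∈ Icc 1 d, (t - j)

namespace alternatingRootProd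

theorem zero_eq_factorial (d : ℕ) : alternatingRootProd d 0 = d.factorial := by
  rw [alternatingRootProd, ← Ico_add_one_right_eq_Icc, ← prod_Ico_id_eq_factorial]
  simp only [zero_sub, prod_neg, Nat.card_Ico, Nat.add_sub_cancel, ← mul_assoc, ← pow_add,
    Even.neg_one_pow ⟨d, rfl⟩, one_mul, Nat.cast_prod]

theorem eq_zero_iff {d : ℕ} {t : ℝ} :
    alternatingRootProd d t = 0 ↔ ∃ k ∈ Icc 1 d, t = k := by
  simp [alternatingRootProd, prod_eq_zero_iff, sub_eq_zero]

theorem complementarity_iff {d : ℕ} {t : ℝ} :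
    0 ≤ t ∧ 0 ≤ alternatingRootProd d t ∧ t * alternatingRootProd d t = 0 ↔
      ∃ k ≤ d, t = k := by
  constructor
  · rintro ⟨-, -, hzero⟩
    rcases mul_eq_zero.mp hzero with rfl | hroot
    · exact ⟨0, d.zero_le, Nat.cast_zero.symm⟩
    · obtain ⟨k, hk, rfl⟩ := eq_zero_iff.mp hroot
      exact ⟨k, (mem_Icc.mp hk).2, rfl⟩
  · rintro ⟨k, hkd, rfl⟩
    rcases k.eq_zero_or_pos with rfl | hk
    · simp [zero_eq_factorial]
    · have hroot := eq_zero_iff.mpr ⟨k, mem_Icc.mpr ⟨hk, hkd⟩, rfl⟩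
      simp [hroot]

end alternatingRootProd

theorem setOf_sum_mul_eq_zero_of_nonneg {ι : Type*} [Fintype ι] (f : ℝ → ℝ) :
    {x : ι → ℝ | (∀ i, 0 ≤ x i) ∧ (∀ i, 0 ≤ f (x i)) ∧ ∑ i, x i * f (x i) = 0} =
      {x | ∀ i, 0 ≤ x i ∧ 0 ≤ f (x i) ∧ x i * f (x i) = 0} := by
  ext x
  simp only [Set.mem_ofPred_eq]
  constructor
  · rintro ⟨hx, hfx, hsum⟩ i
    have hterm : ∀ i ∈ univ, 0 ≤ x i * f (x i) := fun i _ => mul_nonneg (hx i) (hfx i)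
    exact ⟨hx i, hfx i, (sum_eq_zero_iff_of_nonneg hterm).mp hsum i (mem_univ i)⟩
  · intro h
    exact ⟨fun i => (h i).1, fun i => (h i).2.1, sum_eq_zero fun i _ => (h i).2.2⟩

theorem ncard_setOf_forall_exists_natCast_le {ι : Type*} [Fintype ι] [DecidableEq ι] (d : ℕ) :
    {x : ι → ℝ | ∀ i, ∃ k ≤ d, x i = k}.ncard = (d + 1) ^ Fintype.card ι := by
  have hgrid : {x : ι → ℝ | ∀ i, ∃ k ≤ d, x i = k} =
      ↑(Fintype.piFinset fun _ : ι => (range (d + 1)).image (Nat.cast : ℕ → ℝ)) := by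
    ext x
    simp [eq_comm]
  rw [hgrid, Set.ncard_coe_finset, Fintype.card_piFinset, prod_const,
    card_image_of_injective _ Nat.cast_injective, card_range, card_univ]

theorem stmt8_general (n d : ℕ) (p : (Fin n → ℝ) → (Fin n → ℝ))
    (hp : ∀ x i, p x i = (-1 : ℝ) ^ d * ∏ j ∈ Finset.Icc 1 d, (x i - (j : ℝ))) :
    {x : Fin n → ℝ | (∀ i, 0 ≤ x i) ∧ (∀ i, 0 ≤ p x i) ∧ ∑ i, x i * p x i = 0}
      = {x : Fin n → ℝ | ∀ i, ∃ k : ℕ, k ≤ d ∧ x i = (k : ℝ)} ∧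
    ({x : Fin n → ℝ | (∀ i, 0 ≤ x i) ∧ (∀ i, 0 ≤ p x i) ∧
        ∑ i, x i * p x i = 0}).ncard = (d + 1) ^ n := by
  obtain rfl : p = fun x i => alternatingRootProd d (x i) := funext₂ hp
  have hsolutions :
      {x : Fin n → ℝ | (∀ i, 0 ≤ x i) ∧ (∀ i, 0 ≤ alternatingRootProd d (x i)) ∧
        ∑ i, x i * alternatingRootProd d (x i) = 0} =
        {x : Fin n → ℝ | ∀ i, ∃ k : ℕ, k ≤ d ∧ x i = k} := by
    simp only [setOf_sum_mul_eq_zero_of_nonneg, alternatingRootProd.complementarity_iff]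
  refine ⟨hsolutions, ?_⟩
  rw [hsolutions, ncard_setOf_forall_exists_natCast_le, Fintype.card_fin]

theorem stmt8 (n d : ℕ) (hd : 1 ≤ d) (p : (Fin n → ℝ) → (Fin n → ℝ))
    (hp : ∀ x i, p x i = (-1 : ℝ) ^ d * ∏ j ∈ Finset.Icc 1 d, (x i - (j : ℝ))) :
    {x : Fin n → ℝ | (∀ i, 0 ≤ x i) ∧ (∀ i, 0 ≤ p x i) ∧ ∑ i, x i * p x i = 0}
      = {x : Fin n → ℝ | ∀ i, ∃ k : ℕ, k ≤ d ∧ x i = (k : ℝ)} ∧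
    ({x : Fin n → ℝ | (∀ i, 0 ≤ x i) ∧ (∀ i, 0 ≤ p x i) ∧
        ∑ i, x i * p x i = 0}).ncard = (d + 1) ^ n :=
  stmt8_general n d p hp
end
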